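/- arXiv:2405.04438 — 4 statements merged into one kernel-verified Lean document; each statement's English description precedes it below -/
import Mathlib

section
/- Let ℓ, m be natural numbers and let P : ℝ×ℝ → ℝ be the polynomial P(x,y) = x^ℓ·y^m + x^m·y^ℓ. Then the following are equivalent: (1) for all k ≥ 1, all x₁,…,x_k ∈ ℝ and all c₁,…,c_k ∈ ℂ, the sum ∑_{i,j=1}^k c_i·conj(c_j)·P(x_i,x_j) is a nonnegative real number; (2) ℓ = m. -/
open Complex

noncomputable section

theorem mercer_condition_for_xl_ym_plus_xm_yl_iff_eq
    (ℓ m : ℕ) :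
    (∀ k : ℕ, 1 ≤ k → ∀ x : Fin k → ℝ, ∀ c : Fin k → ℂ,
      0 ≤ (∑ i, ∑ j, c i * (starRingEnd ℂ) (c j) *
            (((x i) ^ ℓ * (x j) ^ m + (x i) ^ m * (x j) ^ ℓ : ℝ) : ℂ)).re ∧
        (∑ i, ∑ j, c i * (starRingEnd ℂ) (c j) *
            (((x i) ^ ℓ * (x j) ^ m + (x i) ^ m * (x j) ^ ℓ : ℝ) : ℂ)).im = 0) ↔
    ℓ = m := by
  constructor
  · intro h
    by_contra hne
    have hb : (2:ℝ)^ℓ ≠ (2:ℝ)^m := by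
      intro he
      exact hne (Nat.pow_right_injective le_rfl (by exact_mod_cast he))
    obtain ⟨hre, -⟩ := h 2 (by norm_num) ![2,1]
      (fun i => ((![-((2:ℝ)^ℓ + 2^m), 2*2^(ℓ+m)] i : ℝ) : ℂ))
    simp only [Fin.sum_univ_two, Matrix.cons_val_zero, Matrix.cons_val_one,
      Matrix.head_cons, Complex.conj_ofReal, ← Complex.ofReal_mul,
      ← Complex.ofReal_add, Complex.ofReal_re] at hre
    have h1 : (0:ℝ) < 2^(ℓ+m) := by positivity
    have h2 : (0:ℝ) < ((2:ℝ)^ℓ - 2^m)^2 := by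
      have := sub_ne_zero.mpr hb
      positivity
    rw [pow_add] at h1
    simp only [pow_add, one_pow] at hre
    nlinarith [mul_pos h1 h2, h1, h2]
  · rintro rfl
    intro k hk x c
    have key : (∑ i, ∑ j, c i * (starRingEnd ℂ) (c j) *
          (((x i) ^ ℓ * (x j) ^ ℓ + (x i) ^ ℓ * (x j) ^ ℓ : ℝ) : ℂ))
        = 2 * ((∑ i, c i * ((x i : ℂ))^ℓ) *
            (starRingEnd ℂ) (∑ i, c i * ((x i : ℂ))^ℓ)) := by
      calc (∑ i, ∑ j, c i * (starRingEnd ℂ) (c j) *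
              (((x i) ^ ℓ * (x j) ^ ℓ + (x i) ^ ℓ * (x j) ^ ℓ : ℝ) : ℂ))
          = ∑ i, ∑ j, 2 * ((c i * ((x i : ℂ))^ℓ) *
              (starRingEnd ℂ) (c j * ((x j : ℂ))^ℓ)) := by
            refine Finset.sum_congr rfl fun i _ => Finset.sum_congr rfl fun j _ => ?_
            rw [map_mul, map_pow, Complex.conj_ofReal]
            push_cast
            ring
        _ = 2 * ((∑ i, c i * ((x i : ℂ))^ℓ) *
              (starRingEnd ℂ) (∑ i, c i * ((x i : ℂ))^ℓ)) := by
            rw [map_sum, Finset.sum_mul_sum, Finset.mul_sum]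
            refine Finset.sum_congr rfl fun i _ => ?_
            rw [Finset.mul_sum]
    rw [key, Complex.mul_conj]
    constructor
    · simp only [Complex.mul_re, Complex.ofReal_re, Complex.ofReal_im]
      norm_num
      exact Complex.normSq_nonneg _
    · simp
end
end

section
/- Let n ≥ 1 and let (A₀,B₀,C₀), (A₁,B₁,C₁) ∈ G(n). Then the following are equivalent: (1) (A₀,B₀,C₀) ⪯ (A₁,B₁,C₁) and (A₁,B₁,C₁) ⪯ (A₀,B₀,C₀); (2) A₁−C₁ = A₀−C₀ and B₁−B₀ is symmetric. -/
/-!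
Write `ψ` for the exponent of `θ(A,B,C)`, so `θ = exp ψ` and `θ(√t x, √t y) = exp (t ψ(x,y))`.
Testing the integral operator against sums of indicators of shrinking balls shows that a positive
continuous kernel has positive semidefinite Gram matrices; hence every `exp (t ψ)`, `t > 0`, is a
positive kernel, and differentiating at `t = 0` makes the bilinear part
`ψ(x,y) - ψ(0,y) - ψ(x,0) + ψ(0,0)` positive semidefinite. Its Hermitian matrix
`M(A,B,C) = (A + Aᵀ - C - Cᵀ) - i (B - Bᵀ)` ignores the shifts `r • 1` in `⪯` and changes sign
when the order is reversed, so mutual `⪯` forces `M(A₁ - A₀, B₁ - B₀, C₁ - C₀) = 0`.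
Conversely, if `C₁ - C₀ = A₁ - A₀ =: D` and `S := B₁ - B₀` is symmetric, then
`θ(D + r • 1, S, D + r • 1)(x,y) = g(x) * conj (g(y))`, a positive rank-one kernel.
-/

open MeasureTheory Matrix Complex

noncomputable section

/-- The Gaussian function `θ(A,B,C)(x,y) =
  exp(−(x−y)ᵀA(x−y) − i·(x−y)ᵀB(x+y) − (x+y)ᵀC(x+y))`. -/
def theta {n : ℕ} (A B C : Matrix (Fin n) (Fin n) ℝ) (x y : Fin n → ℝ) : ℂ :=
  Complex.exp (-((((x - y) ⬝ᵥ A.mulVec (x - y)) : ℝ) : ℂ)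
    - Complex.I * ((((x - y) ⬝ᵥ B.mulVec (x + y)) : ℝ) : ℂ)
    - ((((x + y) ⬝ᵥ C.mulVec (x + y)) : ℝ) : ℂ))

/-- The integral operator of the kernel `κ` is positive semidefinite: for every
`f ∈ L²(ℝⁿ,ℂ)`, the integral `∬ κ(x,y) f(y) conj(f(x)) dy dx` is a nonnegative real. -/
def IsPosKernel {n : ℕ} (κ : (Fin n → ℝ) → (Fin n → ℝ) → ℂ) : Prop :=
  ∀ f : (Fin n → ℝ) → ℂ, MemLp f 2 volume →
    0 ≤ (∫ x, ∫ y, κ x y * f y * (starRingEnd ℂ) (f x)).re ∧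
      (∫ x, ∫ y, κ x y * f y * (starRingEnd ℂ) (f x)).im = 0

/-- Evaluation of a polynomial in `2n` variables with complex coefficients at real points. -/
def evalP {n : ℕ} (p : MvPolynomial (Fin n ⊕ Fin n) ℂ) (x y : Fin n → ℝ) : ℂ :=
  MvPolynomial.eval (Sum.elim (fun i => ((x i : ℝ) : ℂ)) (fun i => ((y i : ℝ) : ℂ))) p
/-- Membership in `G⁺(n)`: `A` and `C` are (symmetric) positive definite and the integral
operator of `θ(A,B,C)` is positive semidefinite. -/
def GplusMem {n : ℕ} (A B C : Matrix (Fin n) (Fin n) ℝ) : Prop :=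
  A.PosDef ∧ C.PosDef ∧ IsPosKernel (theta A B C)

/-- The preorder `(A₀,B₀,C₀) ⪯ (A₁,B₁,C₁)`. -/
def Prec {n : ℕ} (A₀ B₀ C₀ A₁ B₁ C₁ : Matrix (Fin n) (Fin n) ℝ) : Prop :=
  ∃ r : ℝ, 0 ≤ r ∧ GplusMem (A₁ - A₀ + r • 1) (B₁ - B₀) (C₁ - C₀ + r • 1)


open Filter Topology Metric
open scoped ComplexOrder MatrixOrder

theorem Continuous.tendsto_setAverage_closedBall {X E : Type*} [MetricSpace X] [ProperSpace X]
    [MeasurableSpace X] [OpensMeasurableSpace X] [NormedAddCommGroup E] [NormedSpace ℝ E]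
    [CompleteSpace E] {μ : Measure X} [IsFiniteMeasureOnCompacts μ] [μ.IsOpenPosMeasure] {f : X → E}
    (hf : Continuous f) (z : X) :
    Tendsto (fun δ => ⨍ x in closedBall z δ, f x ∂μ) (𝓝[>] 0) (𝓝 (f z)) := by
  rw [Metric.tendsto_nhds]
  intro ε hε
  obtain ⟨η, hη, hfη⟩ := Metric.continuousAt_iff.mp hf.continuousAt (ε / 2) (half_pos hε)
  filter_upwards [Ioo_mem_nhdsGT hη] with δ ⟨hδ, hδη⟩
  have hfin : μ (closedBall z δ) < ⊤ := measure_closedBall_lt_top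
  have hpos : 0 < μ.real (closedBall z δ) :=
    ENNReal.toReal_pos (measure_closedBall_pos μ z hδ).ne' hfin.ne
  have hint : IntegrableOn f (closedBall z δ) μ :=
    hf.continuousOn.integrableOn_compact (isCompact_closedBall z δ)
  calc dist (⨍ x in closedBall z δ, f x ∂μ) (f z)
      = ‖(μ.real (closedBall z δ))⁻¹ • ∫ x in closedBall z δ, (f x - f z) ∂μ‖ := by
        rw [dist_eq_norm, setAverage_eq, integral_sub hint (integrableOn_const hfin.ne),
          setIntegral_const, smul_sub, inv_smul_smul₀ hpos.ne']
    _ ≤ (μ.real (closedBall z δ))⁻¹ * (ε / 2 * μ.real (closedBall z δ)) := by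
        rw [norm_smul, Real.norm_of_nonneg (inv_nonneg.2 hpos.le)]
        gcongr
        exact norm_setIntegral_le_of_norm_le_const hfin fun x hx =>
          (dist_eq_norm (f x) (f z) ▸ hfη (lt_of_le_of_lt hx hδη)).le
    _ < ε := by rw [mul_comm (ε / 2), inv_mul_cancel_left₀ hpos.ne']; linarith

theorem integral_integral_mul_sum_indicator {X ι : Type*} [MeasurableSpace X] {μ : Measure X}
    [SFinite μ] [Fintype ι] (κ : X → X → ℂ) {s : ι → Set X} (hs : ∀ i, MeasurableSet (s i))
    (hκ : ∀ i j, IntegrableOn (Function.uncurry κ) (s i ×ˢ s j) (μ.prod μ)) (c : ι → ℂ) :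
    ∫ x, ∫ y, κ x y * (∑ j, (s j).indicator (fun _ => c j) y)
        * (starRingEnd ℂ) (∑ i, (s i).indicator (fun _ => c i) x) ∂μ ∂μ
      = ∑ i, ∑ j, star (c i) * (∫ z in s i ×ˢ s j, Function.uncurry κ z ∂μ.prod μ) * c j := by
  set F : X × X → ℂ := fun z =>
    ∑ i, ∑ j, star (c i) * (s i ×ˢ s j).indicator (Function.uncurry κ) z * c j
  have hF : ∀ x y, κ x y * (∑ j, (s j).indicator (fun _ => c j) y)
      * (starRingEnd ℂ) (∑ i, (s i).indicator (fun _ => c i) x) = F (x, y) := by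
    intro x y
    simp only [F, map_sum, Finset.mul_sum, Finset.sum_mul]
    refine Finset.sum_congr rfl fun i _ => Finset.sum_congr rfl fun j _ => ?_
    by_cases hx : x ∈ s i <;> by_cases hy : y ∈ s j <;> simp [hx, hy]
    ring
  have hint : ∀ i j, Integrable
      (fun z => star (c i) * (s i ×ˢ s j).indicator (Function.uncurry κ) z * c j) (μ.prod μ) :=
    fun i j => (((hκ i j).integrable_indicator ((hs i).prod (hs j))).const_mul _).mul_const _
  simp_rw [hF]
  rw [← integral_prod F (integrable_finsetSum _ fun i _ => integrable_finsetSum _ fun j _ =>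
    hint i j), integral_finsetSum _ fun i _ => integrable_finsetSum _ fun j _ => hint i j]
  refine Finset.sum_congr rfl fun i _ => ?_
  rw [integral_finsetSum _ fun j _ => hint i j]
  refine Finset.sum_congr rfl fun j _ => ?_
  rw [integral_mul_const, integral_const_mul, integral_indicator ((hs i).prod (hs j))]

def IsPosSemidefKernel {X : Type*} (k : X → X → ℂ) : Prop :=
  ∀ (ι : Type) [Fintype ι] (p : ι → X) (c : ι → ℂ),
    0 ≤ ∑ i, ∑ j, star (c i) * k (p i) (p j) * c j

theorem IsPosKernel.isPosSemidefKernel {n : ℕ} {κ : (Fin n → ℝ) → (Fin n → ℝ) → ℂ}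
    (hκ : IsPosKernel κ) (hcont : Continuous (Function.uncurry κ)) : IsPosSemidefKernel κ := by
  intro ι _ p c
  let μ : Measure ((Fin n → ℝ) × (Fin n → ℝ)) := volume.prod volume
  have : μ.IsAddHaarMeasure := Measure.prod.instIsAddHaarMeasure _ _
  let S : ℝ → ℂ := fun δ =>
    ∑ i, ∑ j, star (c i) * (⨍ z in closedBall (p i, p j) δ, Function.uncurry κ z ∂μ) * c j
  have hS : Tendsto S (𝓝[>] 0) (𝓝 (∑ i, ∑ j, star (c i) * κ (p i) (p j) * c j)) :=
    tendsto_finsetSum _ fun i _ => tendsto_finsetSum _ fun j _ =>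
      ((hcont.tendsto_setAverage_closedBall (p i, p j)).const_mul _).mul_const _
  refine ge_of_tendsto hS ?_
  filter_upwards [self_mem_nhdsWithin] with δ (hδ : 0 < δ)
  let f : (Fin n → ℝ) → ℂ := fun y => ∑ j, (closedBall (p j) δ).indicator (fun _ => c j) y
  have hf : MemLp f 2 volume := memLp_finsetSum _ fun j _ =>
    memLp_indicator_const 2 measurableSet_closedBall (c j) (Or.inr measure_closedBall_lt_top.ne)
  have hV : 0 < μ.real (closedBall 0 δ) :=
    ENNReal.toReal_pos (measure_closedBall_pos μ 0 hδ).ne' measure_closedBall_lt_top.ne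
  have hfS : ∫ x, ∫ y, κ x y * f y * (starRingEnd ℂ) (f x) = μ.real (closedBall 0 δ) • S δ := by
    rw [integral_integral_mul_sum_indicator κ (fun _ => measurableSet_closedBall) (fun i j => ?_) c]
    · simp only [S, closedBall_prod_same, Finset.smul_sum]
      refine Finset.sum_congr rfl fun i _ => Finset.sum_congr rfl fun j _ => ?_
      rw [← measure_smul_setAverage _ measure_closedBall_lt_top.ne, measureReal_def,
        measureReal_def, Measure.addHaar_closedBall_center μ, mul_smul_comm, smul_mul_assoc]
    · rw [closedBall_prod_same]
      exact hcont.continuousOn.integrableOn_compact (isCompact_closedBall _ _)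
  obtain ⟨hre, him⟩ := hκ f hf
  exact nonneg_of_smul_nonneg_of_pos_left (hfS ▸ Complex.nonneg_iff.2 ⟨hre, him.symm⟩) hV

namespace IsPosSemidefKernel

variable {X : Type*} {k : X → X → ℂ}

theorem comp (hk : IsPosSemidefKernel k) {Y : Type*} (g : Y → X) :
    IsPosSemidefKernel fun x y => k (g x) (g y) :=
  fun ι _ p c => hk ι (g ∘ p) c

theorem sub_basepoint (hk : IsPosSemidefKernel k) (x₀ : X) :
    IsPosSemidefKernel fun x y => k x y - k x₀ y - k x x₀ + k x₀ x₀ := by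
  intro ι _ p c
  have h := hk (Option ι) (fun o => o.elim x₀ p) (fun o => o.elim (-∑ i, c i) c)
  simp only [Fintype.sum_option, Option.elim_none, Option.elim_some] at h
  convert h using 1
  simp only [mul_sub, sub_mul, mul_add, add_mul, mul_assoc, Finset.sum_add_distrib,
    Finset.sum_sub_distrib, ← Finset.mul_sum, ← Finset.sum_mul, star_neg, star_sum, neg_mul,
    mul_neg, Finset.sum_neg_distrib]
  ring

end IsPosSemidefKernel

theorem Complex.nonneg_of_hasDerivAt_of_nonneg {f : ℝ → ℂ} {L : ℂ} (hf : HasDerivAt f L 0)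
    (h₀ : f 0 = 0) (hpos : ∀ t > 0, 0 ≤ f t) : 0 ≤ L := by
  have hslope := (hasDerivAt_iff_tendsto_slope_zero.mp hf).mono_left (nhdsGT_le_nhdsNE 0)
  refine ge_of_tendsto hslope ?_
  filter_upwards [self_mem_nhdsWithin] with t (ht : 0 < t)
  rw [zero_add, h₀, sub_zero]
  exact smul_nonneg (inv_nonneg.2 ht.le) (hpos t ht)

theorem hasDerivAt_cexp_ofReal_mul (z : ℂ) : HasDerivAt (fun t : ℝ => exp (t * z)) z 0 := by
  simpa using ((hasDerivAt_id (0 : ℝ)).ofReal_comp.mul_const z).cexp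

theorem IsPosSemidefKernel.of_exp {X : Type*} {ψ : X → X → ℂ}
    (hψ : ∀ t : ℝ, 0 < t → IsPosSemidefKernel fun x y => exp (t * ψ x y)) (x₀ : X) :
    IsPosSemidefKernel fun x y => ψ x y - ψ x₀ y - ψ x x₀ + ψ x₀ x₀ := by
  intro ι _ p c
  have hE := hasDerivAt_cexp_ofReal_mul
  refine Complex.nonneg_of_hasDerivAt_of_nonneg
    (HasDerivAt.fun_sum fun i _ => HasDerivAt.fun_sum fun j _ =>
      ((((hE _).sub (hE _)).sub (hE _)).add (hE _)).const_mul (star (c i)) |>.mul_const (c j))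
    (by simp) fun t ht => (hψ t ht).sub_basepoint x₀ ι p c

section CrossMatrix

variable {ι : Type*} (A B C : Matrix ι ι ℝ)

def thetaCrossMatrix : Matrix ι ι ℂ :=
  of fun i j => ((A i j + A j i - C i j - C j i : ℝ) : ℂ) - I * ((B i j - B j i : ℝ) : ℂ)

theorem isHermitian_thetaCrossMatrix : (thetaCrossMatrix A B C).IsHermitian := by
  ext i j
  simp only [thetaCrossMatrix, conjTranspose_apply, of_apply, star_sub, star_mul', Complex.star_def,
    conj_ofReal, conj_I]
  push_cast
  ring

theorem thetaCrossMatrix_add_smul_one [DecidableEq ι] (r : ℝ) :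
    thetaCrossMatrix (A + r • 1) B (C + r • 1) = thetaCrossMatrix A B C := by
  ext i j
  simp only [thetaCrossMatrix, of_apply, Matrix.add_apply, Matrix.smul_apply, smul_eq_mul,
    one_apply, eq_comm]
  split_ifs <;> push_cast <;> ring

theorem thetaCrossMatrix_neg : thetaCrossMatrix (-A) (-B) (-C) = -thetaCrossMatrix A B C := by
  ext i j
  simp only [thetaCrossMatrix, of_apply, Matrix.neg_apply]
  push_cast
  ring

variable {A B C} in
theorem thetaCrossMatrix_eq_zero_iff (hA : A.IsSymm) (hC : C.IsSymm) :
    thetaCrossMatrix A B C = 0 ↔ A = C ∧ B.IsSymm := by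
  constructor
  · intro h
    have hij : ∀ i j, A i j = C i j ∧ B j i = B i j := by
      intro i j
      have hre := congr_arg re (congr_fun (congr_fun h i) j)
      have him := congr_arg im (congr_fun (congr_fun h i) j)
      simp only [thetaCrossMatrix, of_apply, Matrix.zero_apply, hA.apply i j, hC.apply i j,
        sub_re, sub_im, mul_re, mul_im, ofReal_re, ofReal_im, I_re, I_im, zero_re, zero_im,
        mul_zero, zero_mul, one_mul, sub_zero, zero_sub, zero_add] at hre him
      constructor <;> linarith
    exact ⟨ext fun i j => (hij i j).1, ext fun i j => (hij i j).2⟩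
  · rintro ⟨rfl, hB⟩
    ext i j
    simp [thetaCrossMatrix, hB.apply i j]

end CrossMatrix

theorem neg_sum_abs_mul_le_dotProduct_mulVec {ι : Type*} [Fintype ι] (D : Matrix ι ι ℝ)
    (x : ι → ℝ) : -((∑ i, ∑ j, |D i j|) * (x ⬝ᵥ x)) ≤ x ⬝ᵥ D *ᵥ x := by
  have hsq : ∀ i, x i ^ 2 ≤ x ⬝ᵥ x := fun i => by
    simpa [dotProduct, sq] using
      Finset.single_le_sum (fun k _ => mul_self_nonneg (x k)) (Finset.mem_univ i)
  have hterm : ∀ i j, -(|D i j| * (x ⬝ᵥ x)) ≤ x i * (D i j * x j) := by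
    intro i j
    have hprod : |x i| * |x j| ≤ x ⬝ᵥ x := by
      nlinarith [hsq i, hsq j, sq_abs (x i), sq_abs (x j), sq_nonneg (|x i| - |x j|)]
    have habs : |x i * (D i j * x j)| ≤ |D i j| * (x ⬝ᵥ x) := by
      rw [abs_mul, abs_mul, mul_left_comm]
      exact mul_le_mul_of_nonneg_left hprod (abs_nonneg _)
    linarith [neg_abs_le (x i * (D i j * x j))]
  calc -((∑ i, ∑ j, |D i j|) * (x ⬝ᵥ x)) = ∑ i, ∑ j, -(|D i j| * (x ⬝ᵥ x)) := by
        simp only [Finset.sum_mul, Finset.sum_neg_distrib]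
    _ ≤ ∑ i, ∑ j, x i * (D i j * x j) :=
        Finset.sum_le_sum fun i _ => Finset.sum_le_sum fun j _ => hterm i j
    _ = x ⬝ᵥ D *ᵥ x := by simp only [dotProduct, mulVec, Finset.mul_sum]

theorem Matrix.IsSymm.posDef_add_smul_one {ι : Type*} [Fintype ι] [DecidableEq ι]
    {D : Matrix ι ι ℝ} (hD : D.IsSymm) {r : ℝ} (hr : ∑ i, ∑ j, |D i j| < r) :
    (D + r • 1).PosDef := by
  refine .of_dotProduct_mulVec_pos ?_ fun x hx => ?_
  · simpa [IsHermitian, IsSymm] using hD.add (isSymm_one.smul r)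
  · have hx' : 0 < x ⬝ᵥ x := by simpa using dotProduct_star_self_pos_iff.mpr hx
    simp only [star_trivial, add_mulVec, smul_mulVec, one_mulVec, dotProduct_add, dotProduct_smul,
      smul_eq_mul]
    nlinarith [neg_sum_abs_mul_le_dotProduct_mulVec D x]

section Theta

variable {n : ℕ}

def thetaExponent (A B C : Matrix (Fin n) (Fin n) ℝ) (x y : Fin n → ℝ) : ℂ :=
  -((((x - y) ⬝ᵥ A.mulVec (x - y)) : ℝ) : ℂ) - I * ((((x - y) ⬝ᵥ B.mulVec (x + y)) : ℝ) : ℂ)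
    - ((((x + y) ⬝ᵥ C.mulVec (x + y)) : ℝ) : ℂ)

theorem theta_eq_exp_thetaExponent (A B C : Matrix (Fin n) (Fin n) ℝ) (x y : Fin n → ℝ) :
    theta A B C x y = exp (thetaExponent A B C x y) := rfl

theorem continuous_theta (A B C : Matrix (Fin n) (Fin n) ℝ) :
    Continuous (Function.uncurry (theta A B C)) := by
  unfold theta
  fun_prop

theorem thetaExponent_smul (A B C : Matrix (Fin n) (Fin n) ℝ) (h : ℝ) (x y : Fin n → ℝ) :
    thetaExponent A B C (h • x) (h • y) = ((h ^ 2 : ℝ) : ℂ) * thetaExponent A B C x y := by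
  simp only [thetaExponent, ← smul_sub, ← smul_add, mulVec_smul, dotProduct_smul, smul_dotProduct,
    smul_eq_mul]
  push_cast
  ring

theorem thetaExponent_single_sub (A B C : Matrix (Fin n) (Fin n) ℝ) (i j : Fin n) :
    thetaExponent A B C (Pi.single i 1) (Pi.single j 1) - thetaExponent A B C 0 (Pi.single j 1)
      - thetaExponent A B C (Pi.single i 1) 0 + thetaExponent A B C 0 0
      = thetaCrossMatrix A B C i j := by
  simp only [thetaExponent, thetaCrossMatrix, of_apply, zero_sub, sub_zero, zero_add, add_zero,
    mulVec_sub, mulVec_add, mulVec_neg, dotProduct_sub, dotProduct_add, dotProduct_neg,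
    sub_dotProduct, add_dotProduct, neg_dotProduct, mulVec_single_one, single_one_dotProduct,
    col_apply, mulVec_zero, dotProduct_zero, neg_neg]
  push_cast
  ring

theorem IsPosKernel.thetaCrossMatrix_posSemidef {A B C : Matrix (Fin n) (Fin n) ℝ}
    (h : IsPosKernel (theta A B C)) : (thetaCrossMatrix A B C).PosSemidef := by
  have hexp : ∀ t : ℝ, 0 < t →
      IsPosSemidefKernel fun x y => exp (t * thetaExponent A B C x y) := by
    intro t ht
    simpa [theta_eq_exp_thetaExponent, thetaExponent_smul, Real.sq_sqrt ht.le] using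
      (h.isPosSemidefKernel (continuous_theta A B C)).comp (√t • ·)
  refine .of_dotProduct_mulVec_nonneg (isHermitian_thetaCrossMatrix A B C) fun c => ?_
  simpa [thetaExponent_single_sub, dotProduct, mulVec, Finset.mul_sum, mul_assoc] using
    IsPosSemidefKernel.of_exp hexp 0 (Fin n) (fun i => Pi.single i 1) c

theorem Prec.thetaCrossMatrix_posSemidef {A₀ B₀ C₀ A₁ B₁ C₁ : Matrix (Fin n) (Fin n) ℝ}
    (h : Prec A₀ B₀ C₀ A₁ B₁ C₁) :
    (thetaCrossMatrix (A₁ - A₀) (B₁ - B₀) (C₁ - C₀)).PosSemidef := by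
  obtain ⟨r, -, -, -, hθ⟩ := h
  simpa only [thetaCrossMatrix_add_smul_one] using hθ.thetaCrossMatrix_posSemidef

theorem isPosKernel_mul_conj (g : (Fin n → ℝ) → ℂ) :
    IsPosKernel fun x y => g x * (starRingEnd ℂ) (g y) := by
  intro f _
  set z := ∫ y, (starRingEnd ℂ) (g y) * f y
  have hz : ∫ x, ∫ y, g x * (starRingEnd ℂ) (g y) * f y * (starRingEnd ℂ) (f x)
      = (Complex.normSq z : ℂ) := by
    have hconj : ∫ x, g x * (starRingEnd ℂ) (f x) = (starRingEnd ℂ) z := by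
      rw [← integral_conj]
      simp [mul_comm]
    calc ∫ x, ∫ y, g x * (starRingEnd ℂ) (g y) * f y * (starRingEnd ℂ) (f x)
        = ∫ x, g x * (starRingEnd ℂ) (f x) * z := by
          congr 1 with x
          rw [← integral_const_mul]
          congr 1 with y
          ring
      _ = (Complex.normSq z : ℂ) := by rw [integral_mul_const, hconj, mul_comm, mul_conj]
  rw [hz, ofReal_re, ofReal_im]
  exact ⟨Complex.normSq_nonneg z, rfl⟩

theorem theta_self_eq_mul_conj (M : Matrix (Fin n) (Fin n) ℝ) {S : Matrix (Fin n) (Fin n) ℝ}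
    (hS : S.IsSymm) (x y : Fin n → ℝ) :
    theta M S M x y = exp (-((2 * (x ⬝ᵥ M *ᵥ x) : ℝ) : ℂ) - I * ((x ⬝ᵥ S *ᵥ x : ℝ) : ℂ))
      * (starRingEnd ℂ) (exp (-((2 * (y ⬝ᵥ M *ᵥ y) : ℝ) : ℂ) - I * ((y ⬝ᵥ S *ᵥ y : ℝ) : ℂ))) := by
  have hM : (((x - y) ⬝ᵥ M *ᵥ (x - y) : ℝ) : ℂ) + (((x + y) ⬝ᵥ M *ᵥ (x + y) : ℝ) : ℂ)
      = ((2 * (x ⬝ᵥ M *ᵥ x) : ℝ) : ℂ) + ((2 * (y ⬝ᵥ M *ᵥ y) : ℝ) : ℂ) := by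
    norm_cast
    simp only [mulVec_add, mulVec_sub, dotProduct_add, dotProduct_sub, sub_dotProduct,
      add_dotProduct]
    ring
  have hS' : (((x - y) ⬝ᵥ S *ᵥ (x + y) : ℝ) : ℂ)
      = ((x ⬝ᵥ S *ᵥ x : ℝ) : ℂ) - ((y ⬝ᵥ S *ᵥ y : ℝ) : ℂ) := by
    have hyx : y ⬝ᵥ S *ᵥ x = x ⬝ᵥ S *ᵥ y := by
      rw [dotProduct_mulVec, ← mulVec_transpose, hS.eq, dotProduct_comm]
    norm_cast
    simp only [mulVec_add, dotProduct_add, sub_dotProduct, hyx]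
    ring
  rw [theta, ← Complex.exp_conj, ← exp_add]
  congr 1
  simp only [map_sub, map_neg, map_mul, conj_ofReal, conj_I]
  linear_combination -hM - I * hS'

theorem isPosKernel_theta_self (M : Matrix (Fin n) (Fin n) ℝ) {S : Matrix (Fin n) (Fin n) ℝ}
    (hS : S.IsSymm) : IsPosKernel (theta M S M) := by
  convert isPosKernel_mul_conj fun x =>
    exp (-((2 * (x ⬝ᵥ M *ᵥ x) : ℝ) : ℂ) - I * ((x ⬝ᵥ S *ᵥ x : ℝ) : ℂ)) using 1
  exact funext₂ (theta_self_eq_mul_conj M hS)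

theorem prec_of_sub_eq {A₀ B₀ C₀ A₁ B₁ C₁ : Matrix (Fin n) (Fin n) ℝ} (hA : (A₁ - A₀).IsSymm)
    (hCA : C₁ - C₀ = A₁ - A₀) (hB : (B₁ - B₀).IsSymm) : Prec A₀ B₀ C₀ A₁ B₁ C₁ := by
  have hpd := hA.posDef_add_smul_one (lt_one_add (∑ i, ∑ j, |(A₁ - A₀) i j|))
  exact ⟨_, by positivity, hpd, hCA ▸ hpd, hCA ▸ isPosKernel_theta_self _ hB⟩

end Theta

theorem prec_equivalence_characterization_general
    {n : ℕ} (A₀ B₀ C₀ A₁ B₁ C₁ : Matrix (Fin n) (Fin n) ℝ)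
    (hA₀ : A₀.IsSymm) (hC₀ : C₀.IsSymm) (hA₁ : A₁.IsSymm) (hC₁ : C₁.IsSymm) :
    (Prec A₀ B₀ C₀ A₁ B₁ C₁ ∧ Prec A₁ B₁ C₁ A₀ B₀ C₀) ↔
      (A₁ - C₁ = A₀ - C₀ ∧ (B₁ - B₀).IsSymm) := by
  rw [sub_eq_sub_iff_sub_eq_sub]
  constructor
  · rintro ⟨h₀₁, h₁₀⟩
    have hneg := h₁₀.thetaCrossMatrix_posSemidef
    rw [← neg_sub A₁, ← neg_sub B₁, ← neg_sub C₁, thetaCrossMatrix_neg] at hneg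
    have hzero := le_antisymm (neg_nonneg.mp hneg.nonneg) h₀₁.thetaCrossMatrix_posSemidef.nonneg
    exact (thetaCrossMatrix_eq_zero_iff (hA₁.sub hA₀) (hC₁.sub hC₀)).mp hzero
  · rintro ⟨hAC, hB⟩
    refine ⟨prec_of_sub_eq (hA₁.sub hA₀) hAC.symm hB, prec_of_sub_eq (hA₀.sub hA₁) ?_ ?_⟩
    · rw [← neg_sub C₁, ← hAC, neg_sub]
    · simpa only [neg_sub] using hB.neg

theorem prec_equivalence_characterization
    {n : ℕ} (hn : 1 ≤ n) (A₀ B₀ C₀ A₁ B₁ C₁ : Matrix (Fin n) (Fin n) ℝ)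
    (hA₀ : A₀.IsSymm) (hC₀ : C₀.IsSymm) (hA₁ : A₁.IsSymm) (hC₁ : C₁.IsSymm) :
    (Prec A₀ B₀ C₀ A₁ B₁ C₁ ∧ Prec A₁ B₁ C₁ A₀ B₀ C₀) ↔
      (A₁ - C₁ = A₀ - C₀ ∧ (B₁ - B₀).IsSymm) :=
  prec_equivalence_characterization_general A₀ B₀ C₀ A₁ B₁ C₁ hA₀ hC₀ hA₁ hC₁
end
end

section
/- Let n ≥ 1 and let κ ∈ L²(ℝⁿ×ℝⁿ) be a self-adjoint kernel whose integral operator is positive semidefinite. Let g : ℝⁿ → ℂ be a continuous function and suppose the function τ(x,y) = g(x)·conj(g(y))·κ(x,y) belongs to L¹(ℝⁿ×ℝⁿ). Then the integral ∬_{ℝⁿ×ℝⁿ} τ(x,y) dx dy is a nonnegative real number. -/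
open MeasureTheory Matrix Complex

noncomputable section

/-!
On a compact square `K ×ˢ K` the integral of `τ` is the quadratic form of `κ` at
`f = 1_K · conj g`, which lies in `L²` because `g` is bounded on `K`; so it is a nonnegative
real. The closed balls exhaust `ℝⁿ × ℝⁿ`, so by dominated convergence these integrals tend to
the full integral, and the cone of nonnegative reals in `ℂ` is closed.
-/

open Filter ComplexConjugate
open scoped ComplexOrder

theorem MeasureTheory.memLp_indicator_of_continuousOn {α E : Type*} [TopologicalSpace α]
    [T2Space α] [MeasurableSpace α] [OpensMeasurableSpace α] [NormedAddCommGroup E]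
    {μ : Measure α} [IsFiniteMeasureOnCompacts μ] {s : Set α} {h : α → E}
    (hs : IsCompact s) (hh : ContinuousOn h s) (p : ENNReal) :
    MemLp (s.indicator h) p μ := by
  rw [memLp_indicator_iff_restrict hs.measurableSet]
  have : IsFiniteMeasure (μ.restrict s) := isFiniteMeasure_restrict.2 hs.measure_lt_top.ne
  obtain ⟨C, hC⟩ := hs.exists_bound_of_continuousOn hh
  exact MemLp.of_bound (hh.aestronglyMeasurable_of_isCompact hs hs.measurableSet) C
    (ae_restrict_of_forall_mem hs.measurableSet hC)

theorem integral_integral_indicator_conj_eq_setIntegral {α : Type*} [MeasurableSpace α]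
    {μ : Measure α} [SFinite μ] (κ : α → α → ℂ) (g : α → ℂ) {s : Set α}
    (hs : MeasurableSet s)
    (hτ : Integrable (fun q : α × α => g q.1 * conj (g q.2) * κ q.1 q.2) (μ.prod μ)) :
    ∫ x, ∫ y, κ x y * s.indicator (conj ∘ g) y * conj (s.indicator (conj ∘ g) x) ∂μ ∂μ =
      ∫ q in s ×ˢ s, g q.1 * conj (g q.2) * κ q.1 q.2 ∂(μ.prod μ) := by
  have hpoint : ∀ x y, κ x y * s.indicator (conj ∘ g) y * conj (s.indicator (conj ∘ g) x) =
      (s ×ˢ s).indicator (fun q : α × α => g q.1 * conj (g q.2) * κ q.1 q.2) (x, y) := by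
    intro x y
    by_cases hx : x ∈ s <;> by_cases hy : y ∈ s
    · simp only [Set.indicator_of_mem, hx, hy, Set.mem_prod, and_self, Function.comp_apply,
        Complex.conj_conj]
      ring
    all_goals simp [hx, hy]
  simp_rw [hpoint]
  rw [← integral_prod _ (hτ.indicator (hs.prod hs)), integral_indicator (hs.prod hs)]

theorem IsPosKernel.setIntegral_prod_self_nonneg {n : ℕ} {κ : (Fin n → ℝ) → (Fin n → ℝ) → ℂ}
    (hκ : IsPosKernel κ) {g : (Fin n → ℝ) → ℂ} (hg : Continuous g)
    (hτ : Integrable (fun q : (Fin n → ℝ) × (Fin n → ℝ) => g q.1 * conj (g q.2) * κ q.1 q.2))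
    {s : Set (Fin n → ℝ)} (hs : IsCompact s) :
    0 ≤ ∫ q in s ×ˢ s, g q.1 * conj (g q.2) * κ q.1 q.2 := by
  rw [Measure.volume_eq_prod] at hτ ⊢
  rw [← integral_integral_indicator_conj_eq_setIntegral κ g hs.measurableSet hτ,
    Complex.nonneg_iff, eq_comm]
  exact hκ _ (memLp_indicator_of_continuousOn hs (continuous_conj.comp hg).continuousOn 2)

theorem integral_nonneg_of_posKernel_mul_rankOne_general
    {n : ℕ} (κ : (Fin n → ℝ) → (Fin n → ℝ) → ℂ)
    (hκpos : IsPosKernel κ)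
    (g : (Fin n → ℝ) → ℂ) (hg : Continuous g)
    (hτ : Integrable
      (fun q : (Fin n → ℝ) × (Fin n → ℝ) => g q.1 * (starRingEnd ℂ) (g q.2) * κ q.1 q.2)
      volume) :
    0 ≤ (∫ q : (Fin n → ℝ) × (Fin n → ℝ),
          g q.1 * (starRingEnd ℂ) (g q.2) * κ q.1 q.2).re ∧
      (∫ q : (Fin n → ℝ) × (Fin n → ℝ),
          g q.1 * (starRingEnd ℂ) (g q.2) * κ q.1 q.2).im = 0 := by
  have hballs : AECover volume atTop
      fun k : ℕ => Metric.closedBall (0 : (Fin n → ℝ) × (Fin n → ℝ)) k :=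
    aecover_closedBall tendsto_natCast_atTop_atTop
  have hlim := hballs.integral_tendsto_of_countably_generated hτ
  rw [← eq_comm, ← Complex.nonneg_iff]
  refine ge_of_tendsto' hlim fun k => ?_
  rw [← closedBall_prod_same]
  exact hκpos.setIntegral_prod_self_nonneg hg hτ (isCompact_closedBall 0 k)

theorem integral_nonneg_of_posKernel_mul_rankOne
    {n : ℕ} (hn : 1 ≤ n) (κ : (Fin n → ℝ) → (Fin n → ℝ) → ℂ)
    (hκL2 : MemLp (fun q : (Fin n → ℝ) × (Fin n → ℝ) => κ q.1 q.2) 2 volume)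
    (hκsa : ∀ᵐ q : (Fin n → ℝ) × (Fin n → ℝ), κ q.2 q.1 = (starRingEnd ℂ) (κ q.1 q.2))
    (hκpos : IsPosKernel κ)
    (g : (Fin n → ℝ) → ℂ) (hg : Continuous g)
    (hτ : Integrable
      (fun q : (Fin n → ℝ) × (Fin n → ℝ) => g q.1 * (starRingEnd ℂ) (g q.2) * κ q.1 q.2)
      volume) :
    0 ≤ (∫ q : (Fin n → ℝ) × (Fin n → ℝ),
          g q.1 * (starRingEnd ℂ) (g q.2) * κ q.1 q.2).re ∧
      (∫ q : (Fin n → ℝ) × (Fin n → ℝ),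
          g q.1 * (starRingEnd ℂ) (g q.2) * κ q.1 q.2).im = 0 :=
  integral_nonneg_of_posKernel_mul_rankOne_general κ hκpos g hg hτ
end
end

section
/- Let n ≥ 1, let τ ∈ L²(ℝⁿ×ℝⁿ) be a kernel whose integral operator is positive semidefinite, and let g : ℝⁿ → ℂ be a Lebesgue measurable function. Define κ(x,y) = τ(x,y)·g(x)·conj(g(y)). If κ ∈ L²(ℝⁿ×ℝⁿ), then the integral operator of κ is positive semidefinite. -/
open MeasureTheory Matrix Complex

noncomputable section

/-!
Write `h := conj g · f`. Pointwise, `τ(x,y) h(y) conj(h(x)) = κ(x,y) f(y) conj(f(x))`, so the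
form of `κ` at `f` is the form of `τ` at `h`, except that `h` need not lie in `L²`. Truncating `f`
to the sets `{‖g‖ ≤ N}` makes `h` square integrable, so the form of `κ` is nonnegative at each
truncation; since `κ ∈ L²`, the integrand `κ(x,y) f(y) conj(f(x))` is integrable on the product,
and the forms of the truncations converge to the form at `f`.
-/

open MeasureTheory Filter Set ComplexConjugate
open scoped ComplexOrder Topology

variable {α β : Type*} [MeasurableSpace α] [MeasurableSpace β] {μ : Measure α} {ν : Measure β}

namespace MeasureTheory

theorem MemLp.mul_prod {𝕜 : Type*} [RCLike 𝕜] [SFinite ν] {f : α → 𝕜} {g : β → 𝕜}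
    (hf : MemLp f 2 μ) (hg : MemLp g 2 ν) :
    MemLp (fun q : α × β => f q.1 * g q.2) 2 (μ.prod ν) := by
  have hmeas : AEStronglyMeasurable (fun q : α × β => f q.1 * g q.2) (μ.prod ν) :=
    hf.1.comp_fst.mul hg.1.comp_snd
  rw [memLp_two_iff_integrable_sq_norm hmeas]
  simpa only [norm_mul, mul_pow] using
    ((memLp_two_iff_integrable_sq_norm hf.1).1 hf).mul_prod
      ((memLp_two_iff_integrable_sq_norm hg.1).1 hg)

theorem MemLp.mul_indicator_of_norm_le {E : Type*} [NormedRing E] {p : ENNReal} {f g : α → E}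
    {s : Set α} {C : ℝ} (hf : MemLp f p μ) (hg : AEStronglyMeasurable g μ) (hs : MeasurableSet s)
    (hgC : ∀ x ∈ s, ‖g x‖ ≤ C) :
    MemLp (fun x => g x * s.indicator f x) p μ := by
  refine (hf.indicator hs).of_le_mul (c := C) (hg.mul (hf.1.indicator hs))
    (Eventually.of_forall fun x => ?_)
  by_cases hx : x ∈ s
  · simp only [indicator_of_mem hx]
    exact (norm_mul_le _ _).trans (mul_le_mul_of_nonneg_right (hgC x hx) (norm_nonneg _))
  · simp [indicator_of_notMem hx]

end MeasureTheory

/-- The quadratic form `⟨κ̂ f, f⟩` of the integral operator with kernel `κ`. -/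
def kernelForm (μ : Measure α) (κ : α → α → ℂ) (f : α → ℂ) : ℂ :=
  ∫ x, ∫ y, κ x y * f y * conj (f x) ∂μ ∂μ

theorem isPosKernel_iff {n : ℕ} (κ : (Fin n → ℝ) → (Fin n → ℝ) → ℂ) :
    IsPosKernel κ ↔ ∀ f, MemLp f 2 volume → 0 ≤ kernelForm volume κ f := by
  refine forall₂_congr fun f _ => ?_
  rw [Complex.nonneg_iff, eq_comm]
  rfl

theorem kernelForm_conj_mul (μ : Measure α) (τ : α → α → ℂ) (g f : α → ℂ) :
    kernelForm μ (fun x y => τ x y * g x * conj (g y)) f =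
      kernelForm μ τ (fun x => conj (g x) * f x) := by
  simp only [kernelForm, map_mul, Complex.conj_conj]
  congr 1 with x
  congr 1 with y
  ring

section kernelForm

variable [SFinite μ] {κ : α → α → ℂ} {f : α → ℂ}

theorem integrable_kernel_mul_conj (hκ : MemLp (fun q : α × α => κ q.1 q.2) 2 (μ.prod μ))
    (hf : MemLp f 2 μ) :
    Integrable (fun q : α × α => κ q.1 q.2 * f q.2 * conj (f q.1)) (μ.prod μ) := by
  have hprod := hκ.mul (r := 1) (hf.star.mul_prod hf)
  rw [memLp_one_iff_integrable] at hprod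
  refine hprod.congr (Eventually.of_forall fun q => ?_)
  simp only [Pi.mul_apply, Pi.star_apply, RCLike.star_def]
  ring

theorem kernelForm_eq_integral_prod (hκ : MemLp (fun q : α × α => κ q.1 q.2) 2 (μ.prod μ))
    (hf : MemLp f 2 μ) :
    kernelForm μ κ f = ∫ q, κ q.1 q.2 * f q.2 * conj (f q.1) ∂(μ.prod μ) :=
  integral_integral (integrable_kernel_mul_conj hκ hf)

theorem tendsto_kernelForm_indicator {s : ℕ → Set α} (hs : ∀ N, MeasurableSet (s N))
    (hmono : Monotone s) (hcover : ⋃ N, s N = univ)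
    (hκ : MemLp (fun q : α × α => κ q.1 q.2) 2 (μ.prod μ)) (hf : MemLp f 2 μ) :
    Tendsto (fun N => kernelForm μ κ ((s N).indicator f)) atTop (𝓝 (kernelForm μ κ f)) := by
  set K : α × α → ℂ := fun q => κ q.1 q.2 * f q.2 * conj (f q.1)
  have hform : ∀ N, kernelForm μ κ ((s N).indicator f) = ∫ q in s N ×ˢ s N, K q ∂(μ.prod μ) := by
    intro N
    rw [kernelForm_eq_integral_prod hκ (hf.indicator (hs N)),
      ← integral_indicator ((hs N).prod (hs N))]
    congr 1 with ⟨x, y⟩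
    by_cases hx : x ∈ s N <;> by_cases hy : y ∈ s N <;> simp [K, hx, hy]
  have hcover_prod : ⋃ N, s N ×ˢ s N = univ := by
    rw [iUnion_prod_of_monotone hmono hmono, hcover, univ_prod_univ]
  have hlim := tendsto_setIntegral_of_monotone (fun N => (hs N).prod (hs N))
    (fun _ _ hNM => prod_mono (hmono hNM) (hmono hNM))
    (by rw [hcover_prod]; exact (integrable_kernel_mul_conj hκ hf).integrableOn)
  rw [hcover_prod, setIntegral_univ, ← kernelForm_eq_integral_prod hκ hf] at hlim
  simpa only [hform] using hlim

end kernelForm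

theorem posKernel_of_conjugation_by_measurable_function_general
    {n : ℕ} (τ : (Fin n → ℝ) → (Fin n → ℝ) → ℂ)
    (hτpos : IsPosKernel τ)
    (g : (Fin n → ℝ) → ℂ) (hg : Measurable g)
    (hκL2 : MemLp
      (fun q : (Fin n → ℝ) × (Fin n → ℝ) => τ q.1 q.2 * g q.1 * (starRingEnd ℂ) (g q.2))
      2 volume) :
    IsPosKernel (fun x y => τ x y * g x * (starRingEnd ℂ) (g y)) := by
  rw [isPosKernel_iff] at hτpos ⊢
  intro f hf
  set S : ℕ → Set (Fin n → ℝ) := fun N => {x | ‖g x‖ ≤ N}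
  have hS : ∀ N, MeasurableSet (S N) := fun N => measurableSet_le hg.norm measurable_const
  have hmono : Monotone S := fun N M hNM x (hx : ‖g x‖ ≤ N) => hx.trans (Nat.cast_le.2 hNM)
  have hcover : ⋃ N, S N = univ :=
    eq_univ_of_forall fun x => mem_iUnion.2 ⟨⌈‖g x‖⌉₊, Nat.le_ceil ‖g x‖⟩
  refine ge_of_tendsto' (tendsto_kernelForm_indicator hS hmono hcover hκL2 hf) fun N => ?_
  rw [kernelForm_conj_mul]
  exact hτpos _ <| hf.mul_indicator_of_norm_le
    (continuous_star.measurable.comp hg).aestronglyMeasurable (hS N)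
    fun x (hx : ‖g x‖ ≤ N) => (Complex.norm_conj _).trans_le hx

theorem posKernel_of_conjugation_by_measurable_function
    {n : ℕ} (hn : 1 ≤ n) (τ : (Fin n → ℝ) → (Fin n → ℝ) → ℂ)
    (hτL2 : MemLp (fun q : (Fin n → ℝ) × (Fin n → ℝ) => τ q.1 q.2) 2 volume)
    (hτpos : IsPosKernel τ)
    (g : (Fin n → ℝ) → ℂ) (hg : Measurable g)
    (hκL2 : MemLp
      (fun q : (Fin n → ℝ) × (Fin n → ℝ) => τ q.1 q.2 * g q.1 * (starRingEnd ℂ) (g q.2))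
      2 volume) :
    IsPosKernel (fun x y => τ x y * g x * (starRingEnd ℂ) (g y)) :=
  posKernel_of_conjugation_by_measurable_function_general τ hτpos g hg hκL2
end
end
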